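/- Let E be an entanglement measure satisfying (E5) subadditivity: E(ρ⊗σ) ≤ E(ρ) + E(σ) for all states ρ on C^{a}⊗C^{b} and σ on C^{a'}⊗C^{b'} (where ρ⊗σ is the Kronecker product, regarded after the canonical local reindexing as a state on C^{aa'}⊗C^{bb'}), and (E6) convexity: E(λρ + (1−λ)σ) ≤ λE(ρ) + (1−λ)E(σ) for all states ρ, σ on a common system C^a⊗C^b and all λ ∈ [0,1]. Then for every state ρ the regularization E^∞(ρ) = lim_{n→∞} E(ρ^{⊗n})/n exists, and E^∞ is convex: E^∞(λρ + (1−λ)σ) ≤ λE^∞(ρ) + (1−λ)E^∞(σ) for all states ρ, σ on a common system and all λ ∈ [0,1]. -/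

import Mathlib

open scoped BigOperators Classical ComplexOrder
open Matrix Kronecker Filter

noncomputable section

/-! ### Vectors and states -/

/-- The standard inner product on `ι → ℂ`. -/
def cdot {ι : Type*} [Fintype ι] (u v : ι → ℂ) : ℂ := ∑ i, star (u i) * v i

/-- A unit vector. -/
def UnitVec {ι : Type*} [Fintype ι] (ψ : ι → ℂ) : Prop := cdot ψ ψ = 1

/-- An orthonormal family of vectors. -/
def OrthonormalFam {κ ι : Type*} [Fintype ι] (χ : κ → ι → ℂ) : Prop :=
  ∀ i j, cdot (χ i) (χ j) = if i = j then 1 else 0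

/-- Tensor product of vectors in `C^a` and `C^b`. -/
def tensorVec {a b : ℕ} (u : Fin a → ℂ) (v : Fin b → ℂ) : Fin a × Fin b → ℂ :=
  fun p => u p.1 * v p.2

/-- The rank-one operator `|ψ⟩⟨ψ|`. -/
def projVec {ι : Type*} (ψ : ι → ℂ) : Matrix ι ι ℂ :=
  Matrix.of fun p q => ψ p * star (ψ q)

/-- A (mixed) quantum state: a positive semidefinite matrix of trace one. -/
def IsState {ι : Type*} [Fintype ι] (ρ : Matrix ι ι ℂ) : Prop :=
  ρ.PosSemidef ∧ ρ.trace = 1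

/-- A pure state: a rank-one projection `|ψ⟩⟨ψ|` onto a unit vector. -/
def IsPureState {ι : Type*} [Fintype ι] (ρ : Matrix ι ι ℂ) : Prop :=
  ∃ ψ : ι → ℂ, UnitVec ψ ∧ ρ = projVec ψ

/-- A separable (disentangled) state: a finite convex combination of product states. -/
def IsSepState {a b : ℕ} (ρ : Matrix (Fin a × Fin b) (Fin a × Fin b) ℂ) : Prop :=
  ∃ (k : ℕ) (r : Fin k → ℝ) (ρA : Fin k → Matrix (Fin a) (Fin a) ℂ)
    (ρB : Fin k → Matrix (Fin b) (Fin b) ℂ),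
    (∀ i, 0 ≤ r i) ∧ (∑ i, r i = 1) ∧
    (∀ i, (ρA i).PosSemidef ∧ (ρA i).trace = 1) ∧
    (∀ i, (ρB i).PosSemidef ∧ (ρB i).trace = 1) ∧
    ρ = ∑ i, r i • (ρA i ⊗ₖ ρB i)

/-! ### Partial trace, Schmidt coefficients, reduced von Neumann entropy -/

/-- Partial trace over the second tensor factor. -/
def ptraceB {a b : ℕ} (ρ : Matrix (Fin a × Fin b) (Fin a × Fin b) ℂ) :
    Matrix (Fin a) (Fin a) ℂ :=
  Matrix.of fun i j => ∑ k : Fin b, ρ (i, k) (j, k)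

theorem ptraceB_projVec_isHermitian {a b : ℕ} (ψ : Fin a × Fin b → ℂ) :
    (ptraceB (projVec ψ)).IsHermitian := by
  show (ptraceB (projVec ψ))ᴴ = ptraceB (projVec ψ)
  ext i j
  simp only [Matrix.conjTranspose_apply, ptraceB, Matrix.of_apply, projVec, star_sum, star_mul',
    star_star]
  exact Finset.sum_congr rfl fun k _ => mul_comm _ _

/-- The Schmidt coefficients of a vector `ψ ∈ C^a ⊗ C^b`: the eigenvalues (with multiplicity)
of the partial trace over the second factor of `|ψ⟩⟨ψ|`. -/
def schmidtCoeffs {a b : ℕ} (ψ : Fin a × Fin b → ℂ) : Fin a → ℝ :=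
  (ptraceB_projVec_isHermitian ψ).eigenvalues

/-- The reduced von Neumann entropy of the pure state `|ψ⟩⟨ψ|`. -/
def SvN {a b : ℕ} (ψ : Fin a × Fin b → ℂ) : ℝ :=
  -∑ i, schmidtCoeffs ψ i * Real.logb 2 (schmidtCoeffs ψ i)

/-- The number of nonzero Schmidt coefficients. -/
def schmidtRank {a b : ℕ} (ψ : Fin a × Fin b → ℂ) : ℕ :=
  (Finset.univ.filter fun i => schmidtCoeffs ψ i ≠ 0).card

/-- The largest Schmidt coefficient. -/
def maxSchmidt {a b : ℕ} (ψ : Fin a × Fin b → ℂ) : ℝ := ⨆ i, schmidtCoeffs ψ i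

/-- A representative of the maximally entangled state `P₊^d`: a pure state exactly `d` of whose
Schmidt coefficients are nonzero, all equal to `1/d`. -/
def IsMaxEntRep {a b : ℕ} (d : ℕ) (ρ : Matrix (Fin a × Fin b) (Fin a × Fin b) ℂ) : Prop :=
  ∃ ψ : Fin a × Fin b → ℂ, UnitVec ψ ∧ ρ = projVec ψ ∧
    (∀ i, schmidtCoeffs ψ i = 0 ∨ schmidtCoeffs ψ i = 1 / d) ∧
    schmidtRank ψ = d

/-- The standard maximally entangled vector `Ψ₊ = (1/√d) ∑ᵢ eᵢ ⊗ eᵢ` on `C^d ⊗ C^d`. -/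
def maxEntVec (d : ℕ) : Fin d × Fin d → ℂ :=
  fun p => if p.1 = p.2 then ((1 / Real.sqrt d : ℝ) : ℂ) else 0

/-! ### Trace norm -/

/-- The trace norm of a square complex matrix: the sum of its singular values. -/
def traceNorm {ι : Type*} [Fintype ι] [DecidableEq ι] (A : Matrix ι ι ℂ) : ℝ :=
  ∑ i, Real.sqrt ((Matrix.posSemidef_conjTranspose_mul_self A).isHermitian.eigenvalues i)

/-! ### Kronecker products of bipartite states, with the canonical local reindexing -/

/-- The canonical regrouping of indices identifying `(C^a⊗C^b)⊗(C^c⊗C^d)` with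
`C^{ac}⊗C^{bd}`. -/
def pairEquiv (a b c d : ℕ) : ((Fin a × Fin b) × Fin c × Fin d) ≃ Fin (a * c) × Fin (b * d) :=
  (Equiv.prodProdProdComm (Fin a) (Fin b) (Fin c) (Fin d)).trans
    (Equiv.prodCongr finProdFinEquiv finProdFinEquiv)

/-- Kronecker product of two bipartite states, regarded (after the canonical local reindexing)
as a state on `C^{ac}⊗C^{bd}`. -/
def stateKron {a b c d : ℕ} (ρ : Matrix (Fin a × Fin b) (Fin a × Fin b) ℂ)
    (σ : Matrix (Fin c × Fin d) (Fin c × Fin d) ℂ) :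
    Matrix (Fin (a * c) × Fin (b * d)) (Fin (a * c) × Fin (b * d)) ℂ :=
  Matrix.reindex (pairEquiv a b c d) (pairEquiv a b c d) (ρ ⊗ₖ σ)

/-- The `n`-fold Kronecker power `ρ^{⊗n}` of a bipartite state, regarded (after the canonical
local reindexing grouping the `n` A-factors and the `n` B-factors) as a state on
`C^{a^n}⊗C^{b^n}`. -/
def statePow {a b : ℕ} (ρ : Matrix (Fin a × Fin b) (Fin a × Fin b) ℂ) :
    (n : ℕ) → Matrix (Fin (a ^ n) × Fin (b ^ n)) (Fin (a ^ n) × Fin (b ^ n)) ℂ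
  | 0 => 1
  | n + 1 =>
      Matrix.reindex
        (Equiv.prodCongr (finCongr (pow_succ a n).symm) (finCongr (pow_succ b n).symm))
        (Equiv.prodCongr (finCongr (pow_succ a n).symm) (finCongr (pow_succ b n).symm))
        (stateKron (statePow ρ n) ρ)

/-! ### LQCC operations -/

/-- The data of an LQCC protocol from `C^a⊗C^b` to `C^{a'}⊗C^{b'}`: `n ≥ 1` rounds; intermediate
local dimensions; at step `2k` Alice applies operators `V k`, at step `2k+1` Bob applies
operators `W k`, each labelled by a classical outcome and allowed to depend on all outcomes
obtained so far, and each family summing (over its own outcome) to the identity. -/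
structure LQCCProtocol (a b a' b' : ℕ) where
  n : ℕ
  npos : 0 < n
  adim : ℕ → ℕ
  bdim : ℕ → ℕ
  ha0 : adim 0 = a
  hb0 : bdim 0 = b
  han : adim n = a'
  hbn : bdim n = b'
  /-- the number of classical outcomes at each of the `2n` steps -/
  K : Fin (2 * n) → ℕ
  V : ∀ k : ℕ, (∀ s : Fin (2 * n), Fin (K s)) →
      Matrix (Fin (adim (k + 1))) (Fin (adim k)) ℂ
  W : ∀ k : ℕ, (∀ s : Fin (2 * n), Fin (K s)) →
      Matrix (Fin (bdim (k + 1))) (Fin (bdim k)) ℂ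
  /-- Alice's round-`k` operator depends only on the outcomes of steps `≤ 2k`. -/
  hVdep : ∀ (k : ℕ) (i i' : ∀ s : Fin (2 * n), Fin (K s)),
      (∀ s : Fin (2 * n), (s : ℕ) ≤ 2 * k → i s = i' s) → V k i = V k i'
  /-- Bob's round-`k` operator depends only on the outcomes of steps `≤ 2k+1`. -/
  hWdep : ∀ (k : ℕ) (i i' : ∀ s : Fin (2 * n), Fin (K s)),
      (∀ s : Fin (2 * n), (s : ℕ) ≤ 2 * k + 1 → i s = i' s) → W k i = W k i'
  hVnorm : ∀ (k : ℕ) (hk : k < n) (i : ∀ s : Fin (2 * n), Fin (K s)),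
      ∑ j : Fin (K ⟨2 * k, by omega⟩),
        (V k (Function.update i ⟨2 * k, by omega⟩ j))ᴴ *
          V k (Function.update i ⟨2 * k, by omega⟩ j) = 1
  hWnorm : ∀ (k : ℕ) (hk : k < n) (i : ∀ s : Fin (2 * n), Fin (K s)),
      ∑ j : Fin (K ⟨2 * k + 1, by omega⟩),
        (W k (Function.update i ⟨2 * k + 1, by omega⟩ j))ᴴ *
          W k (Function.update i ⟨2 * k + 1, by omega⟩ j) = 1

namespace LQCCProtocol

variable {a b a' b' : ℕ} (P : LQCCProtocol a b a' b')

/-- The type of full classical outcome histories of a protocol. -/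
abbrev Hist : Type := ∀ s : Fin (2 * P.n), Fin (P.K s)

/-- The product `(1⊗W_{k-1})(V_{k-1}⊗1)⋯(1⊗W₀)(V₀⊗1)` of the first `k` rounds of operators,
for a given outcome history. -/
def partialOp (i : P.Hist) :
    (k : ℕ) → Matrix (Fin (P.adim k) × Fin (P.bdim k)) (Fin (P.adim 0) × Fin (P.bdim 0)) ℂ
  | 0 => 1
  | k + 1 =>
      (((1 : Matrix (Fin (P.adim (k + 1))) (Fin (P.adim (k + 1))) ℂ) ⊗ₖ P.W k i) *
        (P.V k i ⊗ₖ (1 : Matrix (Fin (P.bdim k)) (Fin (P.bdim k)) ℂ))) *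
        partialOp i k

/-- The total Kraus operator `V_{i₁…i_{2n}}` of a protocol for a given outcome history. -/
def totalOp (i : P.Hist) : Matrix (Fin a' × Fin b') (Fin a × Fin b) ℂ :=
  Matrix.reindex (Equiv.prodCongr (finCongr P.han) (finCongr P.hbn))
    (Equiv.prodCongr (finCongr P.ha0) (finCongr P.hb0)) (P.partialOp i P.n)

end LQCCProtocol

/-- A map on matrices is an LQCC operation if it is implemented by some LQCC protocol:
`Λ(σ) = ∑ᵢ Vᵢ σ Vᵢᴴ` over all outcome histories `i`. -/
def IsLQCC {a b a' b' : ℕ}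
    (Λ : Matrix (Fin a × Fin b) (Fin a × Fin b) ℂ →
      Matrix (Fin a' × Fin b') (Fin a' × Fin b') ℂ) : Prop :=
  ∃ P : LQCCProtocol a b a' b',
    ∀ σ, Λ σ = ∑ i : P.Hist, P.totalOp i * σ * (P.totalOp i)ᴴ

/-! ### Entanglement measures and the standard conditions -/

/-- A family assigning a real number to every bipartite density matrix, for all dimensions. -/
def EntFun : Type :=
  ∀ (a b : ℕ), Matrix (Fin a × Fin b) (Fin a × Fin b) ℂ → ℝ

/-- Nonnegativity on (mixed) states. -/
def MixedNonneg (E : EntFun) : Prop :=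
  ∀ (a b : ℕ) (ρ : Matrix (Fin a × Fin b) (Fin a × Fin b) ℂ), IsState ρ → 0 ≤ E a b ρ

/-- Nonnegativity on pure states. -/
def PureNonneg (E : EntFun) : Prop :=
  ∀ (a b : ℕ) (ψ : Fin a × Fin b → ℂ), UnitVec ψ → 0 ≤ E a b (projVec ψ)

/-- Invariance under conjugation by local unitaries, on states. -/
def MixedLocalUnitaryInv (E : EntFun) : Prop :=
  ∀ (a b : ℕ) (ρ : Matrix (Fin a × Fin b) (Fin a × Fin b) ℂ), IsState ρ →
    ∀ (U : Matrix (Fin a) (Fin a) ℂ) (V : Matrix (Fin b) (Fin b) ℂ),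
      U ∈ Matrix.unitaryGroup (Fin a) ℂ → V ∈ Matrix.unitaryGroup (Fin b) ℂ →
      E a b ((U ⊗ₖ V) * ρ * (U ⊗ₖ V)ᴴ) = E a b ρ

/-- Invariance under conjugation by local unitaries, on pure states. -/
def PureLocalUnitaryInv (E : EntFun) : Prop :=
  ∀ (a b : ℕ) (ρ : Matrix (Fin a × Fin b) (Fin a × Fin b) ℂ), IsPureState ρ →
    ∀ (U : Matrix (Fin a) (Fin a) ℂ) (V : Matrix (Fin b) (Fin b) ℂ),
      U ∈ Matrix.unitaryGroup (Fin a) ℂ → V ∈ Matrix.unitaryGroup (Fin b) ℂ →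
      E a b ((U ⊗ₖ V) * ρ * (U ⊗ₖ V)ᴴ) = E a b ρ

/-- (E0): separable states have zero entanglement. -/
def CondE0 (E : EntFun) : Prop :=
  ∀ (a b : ℕ) (ρ : Matrix (Fin a × Fin b) (Fin a × Fin b) ℂ), IsState ρ → IsSepState ρ →
    E a b ρ = 0

/-- (E1)=(P1): normalization on representatives of the maximally entangled states. -/
def CondE1 (E : EntFun) : Prop :=
  ∀ (a b d : ℕ), 1 ≤ d → ∀ P : Matrix (Fin a × Fin b) (Fin a × Fin b) ℂ,
    IsMaxEntRep d P → E a b P = Real.logb 2 d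

/-- (E2): monotonicity under LQCC operations. -/
def CondE2 (E : EntFun) : Prop :=
  ∀ (a b a' b' : ℕ)
    (Λ : Matrix (Fin a × Fin b) (Fin a × Fin b) ℂ →
      Matrix (Fin a' × Fin b') (Fin a' × Fin b') ℂ)
    (σ : Matrix (Fin a × Fin b) (Fin a × Fin b) ℂ),
    IsState σ → IsLQCC Λ → E a' b' (Λ σ) ≤ E a b σ

/-- (E3): asymptotic continuity. -/
def CondE3 (E : EntFun) : Prop :=
  ∀ (A B : ℕ → ℕ) (ρ σ : ∀ n : ℕ, Matrix (Fin (A n) × Fin (B n)) (Fin (A n) × Fin (B n)) ℂ),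
    (∀ n, IsState (ρ n)) → (∀ n, IsState (σ n)) →
    Tendsto (fun n => traceNorm (ρ n - σ n)) atTop (nhds 0) →
    Tendsto (fun n =>
      (E (A n) (B n) (ρ n) - E (A n) (B n) (σ n)) / (1 + Real.logb 2 ((A n : ℝ) * (B n : ℝ))))
      atTop (nhds 0)

/-- (E3'): asymptotic continuity, where the first sequence consists of pure states. -/
def CondE3' (E : EntFun) : Prop :=
  ∀ (A B : ℕ → ℕ) (ρ σ : ∀ n : ℕ, Matrix (Fin (A n) × Fin (B n)) (Fin (A n) × Fin (B n)) ℂ),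
    (∀ n, IsPureState (ρ n)) → (∀ n, IsState (σ n)) →
    Tendsto (fun n => traceNorm (ρ n - σ n)) atTop (nhds 0) →
    Tendsto (fun n =>
      (E (A n) (B n) (ρ n) - E (A n) (B n) (σ n)) / (1 + Real.logb 2 ((A n : ℝ) * (B n : ℝ))))
      atTop (nhds 0)

/-- (E4): additivity. -/
def CondE4 (E : EntFun) : Prop :=
  ∀ (a b : ℕ) (ρ : Matrix (Fin a × Fin b) (Fin a × Fin b) ℂ), IsState ρ →
    ∀ n : ℕ, 1 ≤ n → E (a ^ n) (b ^ n) (statePow ρ n) = n * E a b ρ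

/-- (E4'): asymptotic additivity. -/
def CondE4' (E : EntFun) : Prop :=
  ∀ (a b : ℕ) (ρ : Matrix (Fin a × Fin b) (Fin a × Fin b) ℂ), IsState ρ →
    ∀ ε : ℝ, 0 < ε → ∃ N : ℕ, 0 < N ∧ ∀ n : ℕ, N ≤ n →
      E (a ^ n) (b ^ n) (statePow ρ n) / n - ε ≤ E a b ρ ∧
      E a b ρ ≤ E (a ^ n) (b ^ n) (statePow ρ n) / n + ε

/-- (E5): subadditivity. -/
def CondE5 (E : EntFun) : Prop :=
  ∀ (a b c d : ℕ) (ρ : Matrix (Fin a × Fin b) (Fin a × Fin b) ℂ)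
    (σ : Matrix (Fin c × Fin d) (Fin c × Fin d) ℂ), IsState ρ → IsState σ →
    E (a * c) (b * d) (stateKron ρ σ) ≤ E a b ρ + E c d σ

/-- (E5''): existence of the regularization. -/
def CondE5'' (E : EntFun) : Prop :=
  ∀ (a b : ℕ) (ρ : Matrix (Fin a × Fin b) (Fin a × Fin b) ℂ), IsState ρ →
    ∃ L : ℝ, Tendsto (fun n : ℕ => E (a ^ n) (b ^ n) (statePow ρ n) / n) atTop (nhds L)

/-- (E6): convexity. -/
def CondE6 (E : EntFun) : Prop :=
  ∀ (a b : ℕ) (ρ σ : Matrix (Fin a × Fin b) (Fin a × Fin b) ℂ), IsState ρ → IsState σ →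
    ∀ l : ℝ, 0 ≤ l → l ≤ 1 →
      E a b (l • ρ + (1 - l) • σ) ≤ l * E a b ρ + (1 - l) * E a b σ

/-- (E6'): convexity on finite decompositions into pure states. -/
def CondE6' (E : EntFun) : Prop :=
  ∀ (a b k : ℕ) (p : Fin k → ℝ) (ψ : Fin k → Fin a × Fin b → ℂ),
    (∀ i, 0 ≤ p i) → (∑ i, p i = 1) → (∀ i, UnitVec (ψ i)) →
    E a b (∑ i, p i • projVec (ψ i)) ≤ ∑ i, p i * E a b (projVec (ψ i))

/-- (P0): separable pure states have zero entanglement. -/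
def CondP0 (E : EntFun) : Prop :=
  ∀ (a b : ℕ) (ψA : Fin a → ℂ) (ψB : Fin b → ℂ), UnitVec (tensorVec ψA ψB) →
    E a b (projVec (tensorVec ψA ψB)) = 0

/-- (P1): normalization (same as (E1)). -/
def CondP1 (E : EntFun) : Prop := CondE1 E

/-- (P1'): `E(P₊(C²)) = 1`. -/
def CondP1' (E : EntFun) : Prop := E 2 2 (projVec (maxEntVec 2)) = 1

/-- (P2): monotonicity under LQCC operations mapping pure states to pure states. -/
def CondP2 (E : EntFun) : Prop :=
  ∀ (a b a' b' : ℕ)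
    (Λ : Matrix (Fin a × Fin b) (Fin a × Fin b) ℂ →
      Matrix (Fin a' × Fin b') (Fin a' × Fin b') ℂ)
    (σ : Matrix (Fin a × Fin b) (Fin a × Fin b) ℂ),
    IsPureState σ → IsLQCC Λ → IsPureState (Λ σ) → E a' b' (Λ σ) ≤ E a b σ

/-- (P3): asymptotic continuity on pure states. -/
def CondP3 (E : EntFun) : Prop :=
  ∀ (A B : ℕ → ℕ) (ρ σ : ∀ n : ℕ, Matrix (Fin (A n) × Fin (B n)) (Fin (A n) × Fin (B n)) ℂ),
    (∀ n, IsPureState (ρ n)) → (∀ n, IsPureState (σ n)) →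
    Tendsto (fun n => traceNorm (ρ n - σ n)) atTop (nhds 0) →
    Tendsto (fun n =>
      (E (A n) (B n) (ρ n) - E (A n) (B n) (σ n)) / (1 + Real.logb 2 ((A n : ℝ) * (B n : ℝ))))
      atTop (nhds 0)

/-- (P4): additivity on pure states. -/
def CondP4 (E : EntFun) : Prop :=
  ∀ (a b : ℕ) (ψ : Fin a × Fin b → ℂ), UnitVec ψ →
    ∀ n : ℕ, 1 ≤ n →
      E (a ^ n) (b ^ n) (statePow (projVec ψ) n) = n * E a b (projVec ψ)

/-- (P4'): asymptotic additivity on pure states. -/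
def CondP4' (E : EntFun) : Prop :=
  ∀ (a b : ℕ) (ψ : Fin a × Fin b → ℂ), UnitVec ψ →
    ∀ ε : ℝ, 0 < ε → ∃ N : ℕ, 0 < N ∧ ∀ n : ℕ, N ≤ n →
      E (a ^ n) (b ^ n) (statePow (projVec ψ) n) / n - ε ≤ E a b (projVec ψ) ∧
      E a b (projVec ψ) ≤ E (a ^ n) (b ^ n) (statePow (projVec ψ) n) / n + ε

/-! ### Entanglement of distillation and entanglement cost -/

/-- The distillable entanglement `E_D`. -/
def ED {a b : ℕ} (ρ : Matrix (Fin a × Fin b) (Fin a × Fin b) ℂ) : ℝ :=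
  sSup {r : ℝ |
    ∃ (d : ℕ → ℕ)
      (Λ : ∀ n : ℕ, Matrix (Fin (a ^ n) × Fin (b ^ n)) (Fin (a ^ n) × Fin (b ^ n)) ℂ →
        Matrix (Fin (a ^ n) × Fin (b ^ n)) (Fin (a ^ n) × Fin (b ^ n)) ℂ)
      (P : ∀ n : ℕ, Matrix (Fin (a ^ n) × Fin (b ^ n)) (Fin (a ^ n) × Fin (b ^ n)) ℂ),
      (∀ n, 0 < d n) ∧ (∀ n, IsLQCC (Λ n)) ∧ (∀ n, IsMaxEntRep (d n) (P n)) ∧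
      Tendsto (fun n => traceNorm (P n - Λ n (statePow ρ n))) atTop (nhds 0) ∧
      r = Filter.limsup (fun n : ℕ => Real.logb 2 (d n) / n) atTop}

/-- The entanglement cost `E_C`. -/
def EC {a b : ℕ} (ρ : Matrix (Fin a × Fin b) (Fin a × Fin b) ℂ) : ℝ :=
  sInf {r : ℝ |
    ∃ (d : ℕ → ℕ)
      (Λ : ∀ n : ℕ, Matrix (Fin (d n) × Fin (d n)) (Fin (d n) × Fin (d n)) ℂ →
        Matrix (Fin (a ^ n) × Fin (b ^ n)) (Fin (a ^ n) × Fin (b ^ n)) ℂ)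
      (P : ∀ n : ℕ, Matrix (Fin (d n) × Fin (d n)) (Fin (d n) × Fin (d n)) ℂ),
      (∀ n, 0 < d n) ∧ (∀ n, IsLQCC (Λ n)) ∧ (∀ n, IsMaxEntRep (d n) (P n)) ∧
      Tendsto (fun n => traceNorm (Λ n (P n) - statePow ρ n)) atTop (nhds 0) ∧
      r = Filter.liminf (fun n : ℕ => Real.logb 2 (d n) / n) atTop}


/-! ### Majorization and composition of families of maps -/

/-- For vectors arranged in decreasing order, `MajorizesDesc q p` says that `q` majorizes `p`:
for every `k`, the sum of the `k` largest entries of `q` is at least that of `p`. -/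
def MajorizesDesc {M : ℕ} (q p : Fin M → ℝ) : Prop :=
  ∀ k : ℕ, k ≤ M →
    ∑ i ∈ Finset.univ.filter (fun i : Fin M => (i : ℕ) < k), p i ≤
      ∑ i ∈ Finset.univ.filter (fun i : Fin M => (i : ℕ) < k), q i

/-- `composeFam N f = f 0 ∘ f 1 ∘ ⋯ ∘ f (N-1)` (the identity for `N = 0`). -/
def composeFam {α : Type*} : (N : ℕ) → (Fin N → α → α) → α → α
  | 0, _ => id
  | N + 1, f => f 0 ∘ composeFam N (fun i => f i.succ)

end

open scoped Topology

/-!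
Local reindexings are conjugations by local permutation unitaries, so `E` is invariant under them.
Since `ρ^{⊗m} ⊗ ρ^{⊗n}` is a local reindexing of `ρ^{⊗(m+n)}`, subadditivity makes
`n ↦ E(ρ^{⊗n})` a nonnegative subadditive sequence, and Fekete's lemma gives the limit.

For convexity, write `μ = λρ + (1-λ)σ` and peel off one factor `μ` of `μ^{⊗n} ⊗ ρ^{⊗j} ⊗ σ^{⊗k}`
at a time: by bilinearity of `⊗`, convexity and local invariance, `E` of it is at most the
`λ, 1-λ` average of the same quantity for `(n-1, j+1, k)` and `(n-1, j, k+1)`. Feeding in affine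
bounds `E(ρ^{⊗j}) ≤ j (E^∞(ρ) + ε) + C` (and likewise for `σ`) at `n = 0` gives
`E(μ^{⊗n}) ≤ n (λ E^∞(ρ) + (1-λ) E^∞(σ) + ε) + C'`.
-/

theorem exists_le_mul_add_of_tendsto_div {f : ℕ → ℝ} {L c : ℝ}
    (hf : Tendsto (fun n => f n / n) atTop (𝓝 L)) (hc : L < c) :
    ∃ C, ∀ n, f n ≤ n * c + C := by
  have hev : ∀ᶠ n : ℕ in atTop, f n - n * c ≤ 0 := by
    filter_upwards [hf.eventually_lt_const hc, eventually_gt_atTop 0] with n hn hpos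
    rw [div_lt_iff₀ (Nat.cast_pos.2 hpos)] at hn
    linarith
  obtain ⟨C, hC⟩ := (isBoundedUnder_of_eventually_le hev).bddAbove_range
  exact ⟨C, fun n => by linarith [hC ⟨n, rfl⟩]⟩

theorem le_of_tendsto_div_of_le_mul_add {f : ℕ → ℝ} {L c C : ℝ}
    (hf : Tendsto (fun n => f n / n) atTop (𝓝 L)) (h : ∀ n, f n ≤ n * c + C) : L ≤ c := by
  have hlim : Tendsto (fun n : ℕ => c + C / n) atTop (𝓝 c) := by
    simpa using tendsto_const_nhds.add (tendsto_const_div_atTop_nhds_zero_nat C)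
  refine le_of_tendsto_of_tendsto hf hlim ?_
  filter_upwards [eventually_gt_atTop 0] with n hn
  rw [div_le_iff₀ (Nat.cast_pos.2 hn), add_mul, div_mul_cancel₀ _ (Nat.cast_pos.2 hn).ne']
  linarith [h n]

theorem le_affine_of_le_convexComb_succ {h : ℕ → ℕ → ℕ → ℝ} {l A B C : ℝ} (h₀ : 0 ≤ l)
    (h₁ : l ≤ 1) (hzero : ∀ j k, h 0 j k ≤ j * A + k * B + C)
    (hsucc : ∀ n j k, h (n + 1) j k ≤ l * h n (j + 1) k + (1 - l) * h n j (k + 1)) :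
    ∀ n j k, h n j k ≤ n * (l * A + (1 - l) * B) + j * A + k * B + C := by
  intro n
  induction n with
  | zero => simpa using hzero
  | succ n ih =>
    intro j k
    calc h (n + 1) j k ≤ l * h n (j + 1) k + (1 - l) * h n j (k + 1) := hsucc n j k
      _ ≤ l * (n * (l * A + (1 - l) * B) + (j + 1 : ℕ) * A + k * B + C) +
          (1 - l) * (n * (l * A + (1 - l) * B) + j * A + (k + 1 : ℕ) * B + C) :=
        add_le_add (mul_le_mul_of_nonneg_left (ih _ _) h₀)
          (mul_le_mul_of_nonneg_left (ih _ _) (sub_nonneg.2 h₁))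
      _ = (n + 1 : ℕ) * (l * A + (1 - l) * B) + j * A + k * B + C := by
        push_cast
        ring

def LocEquiv {p q p' q' : ℕ} (A : Matrix (Fin p × Fin q) (Fin p × Fin q) ℂ)
    (B : Matrix (Fin p' × Fin q') (Fin p' × Fin q') ℂ) : Prop :=
  ∃ (eA : Fin p ≃ Fin p') (eB : Fin q ≃ Fin q'),
    B = Matrix.reindex (eA.prodCongr eB) (eA.prodCongr eB) A

namespace LocEquiv

variable {p q p' q' p'' q'' : ℕ} {A : Matrix (Fin p × Fin q) (Fin p × Fin q) ℂ}
  {B : Matrix (Fin p' × Fin q') (Fin p' × Fin q') ℂ}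
  {C : Matrix (Fin p'' × Fin q'') (Fin p'' × Fin q'') ℂ}

theorem refl (A : Matrix (Fin p × Fin q) (Fin p × Fin q) ℂ) : LocEquiv A A :=
  ⟨Equiv.refl _, Equiv.refl _, by simp⟩

theorem symm (h : LocEquiv A B) : LocEquiv B A := by
  obtain ⟨eA, eB, rfl⟩ := h
  exact ⟨eA.symm, eB.symm, by ext ⟨_, _⟩ ⟨_, _⟩; simp⟩

theorem trans (h₁ : LocEquiv A B) (h₂ : LocEquiv B C) : LocEquiv A C := by
  obtain ⟨eA, eB, rfl⟩ := h₁
  obtain ⟨fA, fB, rfl⟩ := h₂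
  exact ⟨eA.trans fA, eB.trans fB, by ext ⟨_, _⟩ ⟨_, _⟩; simp⟩

theorem stateKron {a b c d : ℕ} {A' : Matrix (Fin a × Fin b) (Fin a × Fin b) ℂ}
    {B' : Matrix (Fin c × Fin d) (Fin c × Fin d) ℂ} (h₁ : LocEquiv A A') (h₂ : LocEquiv B B') :
    LocEquiv (_root_.stateKron A B) (_root_.stateKron A' B') := by
  obtain ⟨eA, eB, rfl⟩ := h₁
  obtain ⟨fA, fB, rfl⟩ := h₂
  refine ⟨finProdFinEquiv.symm.trans ((eA.prodCongr fA).trans finProdFinEquiv),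
    finProdFinEquiv.symm.trans ((eB.prodCongr fB).trans finProdFinEquiv), ?_⟩
  ext
  simp [_root_.stateKron, pairEquiv]

end LocEquiv

section
variable {a b c d e f : ℕ} (A : Matrix (Fin a × Fin b) (Fin a × Fin b) ℂ)
  (B : Matrix (Fin c × Fin d) (Fin c × Fin d) ℂ) (C : Matrix (Fin e × Fin f) (Fin e × Fin f) ℂ)

theorem locEquiv_stateKron_comm : LocEquiv (stateKron A B) (stateKron B A) := by
  refine ⟨finProdFinEquiv.symm.trans ((Equiv.prodComm _ _).trans finProdFinEquiv),
    finProdFinEquiv.symm.trans ((Equiv.prodComm _ _).trans finProdFinEquiv), ?_⟩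
  ext
  simp [stateKron, pairEquiv, mul_comm]

theorem locEquiv_stateKron_assoc :
    LocEquiv (stateKron (stateKron A B) C) (stateKron A (stateKron B C)) := by
  refine ⟨finProdFinEquiv.symm.trans ((finProdFinEquiv.symm.prodCongr (Equiv.refl _)).trans
      ((Equiv.prodAssoc _ _ _).trans (((Equiv.refl _).prodCongr finProdFinEquiv).trans
        finProdFinEquiv))),
    finProdFinEquiv.symm.trans ((finProdFinEquiv.symm.prodCongr (Equiv.refl _)).trans
      ((Equiv.prodAssoc _ _ _).trans (((Equiv.refl _).prodCongr finProdFinEquiv).trans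
        finProdFinEquiv))), ?_⟩
  ext
  simp [stateKron, pairEquiv, mul_assoc]

theorem locEquiv_stateKron_left_comm :
    LocEquiv (stateKron A (stateKron B C)) (stateKron B (stateKron A C)) :=
  (locEquiv_stateKron_assoc A B C).symm.trans
    (((locEquiv_stateKron_comm A B).stateKron (.refl C)).trans (locEquiv_stateKron_assoc B A C))

theorem locEquiv_stateKron_one (hc : c = 1) (hd : d = 1) :
    LocEquiv (stateKron A (1 : Matrix (Fin c × Fin d) (Fin c × Fin d) ℂ)) A := by
  subst hc hd
  refine ⟨finProdFinEquiv.symm.trans (Equiv.prodUnique _ _),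
    finProdFinEquiv.symm.trans (Equiv.prodUnique _ _), ?_⟩
  ext
  simp [stateKron, pairEquiv]

end

section
variable {a b : ℕ} (ρ : Matrix (Fin a × Fin b) (Fin a × Fin b) ℂ)

@[simp]
theorem statePow_zero : statePow ρ 0 = 1 :=
  rfl

theorem locEquiv_stateKron_statePow_succ (n : ℕ) :
    LocEquiv (stateKron (statePow ρ n) ρ) (statePow ρ (n + 1)) :=
  ⟨finCongr (pow_succ a n).symm, finCongr (pow_succ b n).symm, rfl⟩

theorem locEquiv_stateKron_statePow_succ' (n : ℕ) :
    LocEquiv (stateKron ρ (statePow ρ n)) (statePow ρ (n + 1)) :=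
  (locEquiv_stateKron_comm _ _).trans (locEquiv_stateKron_statePow_succ ρ n)

theorem locEquiv_stateKron_statePow_zero {c d : ℕ} (A : Matrix (Fin c × Fin d) (Fin c × Fin d) ℂ) :
    LocEquiv (stateKron A (statePow ρ 0)) A :=
  locEquiv_stateKron_one A (pow_zero a) (pow_zero b)

theorem locEquiv_stateKron_statePow_add (m : ℕ) :
    ∀ n, LocEquiv (stateKron (statePow ρ m) (statePow ρ n)) (statePow ρ (m + n))
  | 0 => locEquiv_stateKron_statePow_zero ρ _
  | n + 1 =>
    ((LocEquiv.refl _).stateKron (locEquiv_stateKron_statePow_succ ρ n).symm).trans <|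
      (locEquiv_stateKron_assoc _ _ _).symm.trans <|
        ((locEquiv_stateKron_statePow_add m n).stateKron (.refl ρ)).trans <|
          locEquiv_stateKron_statePow_succ ρ (m + n)

end

theorem Matrix.permMatrix_mem_unitaryGroup {ι : Type*} [Fintype ι] [DecidableEq ι]
    (g : Equiv.Perm ι) : g.permMatrix ℂ ∈ Matrix.unitaryGroup ι ℂ := by
  rw [Matrix.mem_unitaryGroup_iff, Matrix.star_eq_conjTranspose, conjTranspose_permMatrix,
    ← permMatrix_mul, inv_mul_cancel, permMatrix_one]

theorem Matrix.kronecker_permMatrix {ι κ : Type*} [DecidableEq ι] [DecidableEq κ]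
    (g : Equiv.Perm ι) (h : Equiv.Perm κ) :
    g.permMatrix ℂ ⊗ₖ h.permMatrix ℂ = Equiv.Perm.permMatrix ℂ (g.prodCongr h) := by
  ext ⟨i, j⟩ ⟨k, l⟩
  simp [PEquiv.toMatrix_apply, ← ite_and, and_comm]

theorem Matrix.reindex_eq_permMatrix_mul_mul {ι : Type*} [Fintype ι] [DecidableEq ι]
    (g : Equiv.Perm ι) (A : Matrix ι ι ℂ) :
    Matrix.reindex g g A =
      Equiv.Perm.permMatrix ℂ g.symm * A * (Equiv.Perm.permMatrix ℂ g.symm)ᴴ := by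
  rw [conjTranspose_permMatrix, PEquiv.toMatrix_toPEquiv_mul, PEquiv.mul_toMatrix_toPEquiv]
  rfl

theorem MixedLocalUnitaryInv.apply_eq_of_locEquiv {E : EntFun} (hinv : MixedLocalUnitaryInv E)
    {p q p' q' : ℕ} {A : Matrix (Fin p × Fin q) (Fin p × Fin q) ℂ}
    {B : Matrix (Fin p' × Fin q') (Fin p' × Fin q') ℂ} (hA : IsState A) (h : LocEquiv A B) :
    E p' q' B = E p q A := by
  obtain ⟨eA, eB, rfl⟩ := h
  obtain rfl : p = p' := by simpa using Fintype.card_congr eA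
  obtain rfl : q = q' := by simpa using Fintype.card_congr eB
  rw [Matrix.reindex_eq_permMatrix_mul_mul, Equiv.prodCongr_symm, ← Matrix.kronecker_permMatrix]
  exact hinv p q A hA _ _ (permMatrix_mem_unitaryGroup _) (permMatrix_mem_unitaryGroup _)

theorem IsState.reindex {ι κ : Type*} [Fintype ι] [Fintype κ] {A : Matrix ι ι ℂ} (hA : IsState A)
    (g : ι ≃ κ) : IsState (Matrix.reindex g g A) :=
  ⟨hA.1.submatrix _, by
    rw [← hA.2]
    exact g.symm.sum_comp fun i => A i i⟩

theorem IsState.of_locEquiv {p q p' q' : ℕ} {A : Matrix (Fin p × Fin q) (Fin p × Fin q) ℂ}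
    {B : Matrix (Fin p' × Fin q') (Fin p' × Fin q') ℂ} (hA : IsState A) (h : LocEquiv A B) :
    IsState B := by
  obtain ⟨eA, eB, rfl⟩ := h
  exact hA.reindex _

theorem IsState.stateKron {a b c d : ℕ} {A : Matrix (Fin a × Fin b) (Fin a × Fin b) ℂ}
    {B : Matrix (Fin c × Fin d) (Fin c × Fin d) ℂ} (hA : IsState A) (hB : IsState B) :
    IsState (stateKron A B) :=
  IsState.reindex ⟨hA.1.kronecker hB.1, by rw [Matrix.trace_kronecker, hA.2, hB.2, mul_one]⟩ _

theorem IsState.statePow {a b : ℕ} {ρ : Matrix (Fin a × Fin b) (Fin a × Fin b) ℂ}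
    (hρ : IsState ρ) : ∀ n, IsState (statePow ρ n)
  | 0 => ⟨PosSemidef.one, by rw [statePow_zero, trace_one]; simp⟩
  | n + 1 => ((hρ.statePow n).stateKron hρ).of_locEquiv (locEquiv_stateKron_statePow_succ ρ n)

theorem IsState.smul_add_smul {ι : Type*} [Fintype ι] {ρ σ : Matrix ι ι ℂ} (hρ : IsState ρ)
    (hσ : IsState σ) {l : ℝ} (h₀ : 0 ≤ l) (h₁ : l ≤ 1) : IsState (l • ρ + (1 - l) • σ) :=
  ⟨(hρ.1.smul h₀).add (hσ.1.smul (sub_nonneg.2 h₁)), by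
    simp [Matrix.trace_add, Matrix.trace_smul, hρ.2, hσ.2]⟩

section
variable {a b c d : ℕ}

theorem stateKron_add (A : Matrix (Fin a × Fin b) (Fin a × Fin b) ℂ)
    (B C : Matrix (Fin c × Fin d) (Fin c × Fin d) ℂ) :
    stateKron A (B + C) = stateKron A B + stateKron A C := by
  simp [stateKron, kronecker_add, submatrix_add]

theorem add_stateKron (A B : Matrix (Fin a × Fin b) (Fin a × Fin b) ℂ)
    (C : Matrix (Fin c × Fin d) (Fin c × Fin d) ℂ) :
    stateKron (A + B) C = stateKron A C + stateKron B C := by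
  simp [stateKron, add_kronecker, submatrix_add]

theorem stateKron_smul (A : Matrix (Fin a × Fin b) (Fin a × Fin b) ℂ) (r : ℝ)
    (B : Matrix (Fin c × Fin d) (Fin c × Fin d) ℂ) :
    stateKron A (r • B) = r • stateKron A B := by
  simp [stateKron, kronecker_smul, submatrix_smul]

theorem smul_stateKron (r : ℝ) (A : Matrix (Fin a × Fin b) (Fin a × Fin b) ℂ)
    (B : Matrix (Fin c × Fin d) (Fin c × Fin d) ℂ) :
    stateKron (r • A) B = r • stateKron A B := by
  simp [stateKron, smul_kronecker, submatrix_smul]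

end

section
variable {E : EntFun} {a b : ℕ} {ρ σ : Matrix (Fin a × Fin b) (Fin a × Fin b) ℂ}

theorem CondE5.subadditive_statePow (hE5 : CondE5 E) (hinv : MixedLocalUnitaryInv E)
    (hρ : IsState ρ) : Subadditive fun n => E (a ^ n) (b ^ n) (statePow ρ n) := fun m n =>
  (hinv.apply_eq_of_locEquiv ((hρ.statePow m).stateKron (hρ.statePow n))
    (locEquiv_stateKron_statePow_add ρ m n)).trans_le
      (hE5 _ _ _ _ _ _ (hρ.statePow m) (hρ.statePow n))

theorem CondE5.exists_tendsto_statePow_div (hE5 : CondE5 E) (hnn : MixedNonneg E)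
    (hinv : MixedLocalUnitaryInv E) (hρ : IsState ρ) :
    ∃ L, Tendsto (fun n : ℕ => E (a ^ n) (b ^ n) (statePow ρ n) / n) atTop (𝓝 L) := by
  have hsub := hE5.subadditive_statePow hinv hρ
  refine ⟨hsub.lim, hsub.tendsto_lim ⟨0, ?_⟩⟩
  rintro _ ⟨n, rfl⟩
  exact div_nonneg (hnn _ _ _ (hρ.statePow n)) n.cast_nonneg

theorem CondE6.le_stateKron_statePow_succ (hE6 : CondE6 E) (hinv : MixedLocalUnitaryInv E)
    (hρ : IsState ρ) (hσ : IsState σ) {l : ℝ} (h₀ : 0 ≤ l) (h₁ : l ≤ 1) (n j k : ℕ) :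
    let μ := l • ρ + (1 - l) • σ
    E _ _ (stateKron (statePow μ (n + 1)) (stateKron (statePow ρ j) (statePow σ k))) ≤
      l * E _ _ (stateKron (statePow μ n) (stateKron (statePow ρ (j + 1)) (statePow σ k))) +
      (1 - l) *
        E _ _ (stateKron (statePow μ n) (stateKron (statePow ρ j) (statePow σ (k + 1)))) := by
  intro μ
  set W := stateKron (statePow ρ j) (statePow σ k)
  have hμ : IsState μ := hρ.smul_add_smul hσ h₀ h₁
  have hW : IsState W := (hρ.statePow j).stateKron (hσ.statePow k)
  have hρW : IsState (stateKron (statePow μ n) (stateKron ρ W)) :=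
    (hμ.statePow n).stateKron (hρ.stateKron hW)
  have hσW : IsState (stateKron (statePow μ n) (stateKron σ W)) :=
    (hμ.statePow n).stateKron (hσ.stateKron hW)
  have hsplit : stateKron (statePow μ n) (stateKron μ W) =
      l • stateKron (statePow μ n) (stateKron ρ W) +
        (1 - l) • stateKron (statePow μ n) (stateKron σ W) := by
    simp only [μ, add_stateKron, smul_stateKron, stateKron_add, stateKron_smul]
  have hρ_succ : LocEquiv (stateKron ρ W) (stateKron (statePow ρ (j + 1)) (statePow σ k)) :=
    (locEquiv_stateKron_assoc _ _ _).symm.trans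
      ((locEquiv_stateKron_statePow_succ' ρ j).stateKron (.refl _))
  have hσ_succ : LocEquiv (stateKron σ W) (stateKron (statePow ρ j) (statePow σ (k + 1))) :=
    (locEquiv_stateKron_left_comm _ _ _).trans
      ((LocEquiv.refl _).stateKron (locEquiv_stateKron_statePow_succ' σ k))
  calc E _ _ (stateKron (statePow μ (n + 1)) W)
      = E _ _ (stateKron (statePow μ n) (stateKron μ W)) :=
        hinv.apply_eq_of_locEquiv ((hμ.statePow n).stateKron (hμ.stateKron hW))
          ((locEquiv_stateKron_assoc _ _ _).symm.trans
            ((locEquiv_stateKron_statePow_succ μ n).stateKron (.refl W)))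
    _ ≤ l * E _ _ (stateKron (statePow μ n) (stateKron ρ W)) +
        (1 - l) * E _ _ (stateKron (statePow μ n) (stateKron σ W)) :=
        hsplit ▸ hE6 _ _ _ _ hρW hσW l h₀ h₁
    _ = _ := by
      rw [hinv.apply_eq_of_locEquiv hρW ((LocEquiv.refl _).stateKron hρ_succ),
        hinv.apply_eq_of_locEquiv hσW ((LocEquiv.refl _).stateKron hσ_succ)]

theorem CondE6.statePow_convexComb_le (hE6 : CondE6 E) (hE5 : CondE5 E)
    (hinv : MixedLocalUnitaryInv E) (hρ : IsState ρ) (hσ : IsState σ) {l : ℝ} (h₀ : 0 ≤ l)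
    (h₁ : l ≤ 1) {cρ cσ Cρ Cσ : ℝ}
    (hρC : ∀ n, E (a ^ n) (b ^ n) (statePow ρ n) ≤ n * cρ + Cρ)
    (hσC : ∀ n, E (a ^ n) (b ^ n) (statePow σ n) ≤ n * cσ + Cσ) (n : ℕ) :
    E (a ^ n) (b ^ n) (statePow (l • ρ + (1 - l) • σ) n) ≤
      n * (l * cρ + (1 - l) * cσ) + (Cρ + Cσ) := by
  set μ := l • ρ + (1 - l) • σ
  have hμ : IsState μ := hρ.smul_add_smul hσ h₀ h₁
  calc E _ _ (statePow μ n)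
      = E _ _ (stateKron (statePow μ n) (stateKron (statePow ρ 0) (statePow σ 0))) :=
        (hinv.apply_eq_of_locEquiv (hμ.statePow n)
          ((LocEquiv.refl _).stateKron (locEquiv_stateKron_statePow_zero σ _) |>.trans
            (locEquiv_stateKron_statePow_zero ρ _)).symm).symm
    _ ≤ n * (l * cρ + (1 - l) * cσ) + (0 : ℕ) * cρ + (0 : ℕ) * cσ + (Cρ + Cσ) :=
        le_affine_of_le_convexComb_succ
          (h := fun n j k =>
            E _ _ (stateKron (statePow μ n) (stateKron (statePow ρ j) (statePow σ k))))
          h₀ h₁ (fun j k => ?_) (hE6.le_stateKron_statePow_succ hinv hρ hσ h₀ h₁) n 0 0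
    _ = n * (l * cρ + (1 - l) * cσ) + (Cρ + Cσ) := by simp
  have hW := (hρ.statePow j).stateKron (hσ.statePow k)
  calc E _ _ (stateKron (statePow μ 0) (stateKron (statePow ρ j) (statePow σ k)))
      = E _ _ (stateKron (statePow ρ j) (statePow σ k)) :=
        hinv.apply_eq_of_locEquiv hW
          ((locEquiv_stateKron_comm _ _).trans (locEquiv_stateKron_statePow_zero μ _)).symm
    _ ≤ E _ _ (statePow ρ j) + E _ _ (statePow σ k) :=
        hE5 _ _ _ _ _ _ (hρ.statePow j) (hσ.statePow k)
    _ ≤ j * cρ + k * cσ + (Cρ + Cσ) := by linarith [hρC j, hσC k]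

theorem CondE6.le_convexComb_of_tendsto (hE6 : CondE6 E) (hE5 : CondE5 E)
    (hinv : MixedLocalUnitaryInv E) (hρ : IsState ρ) (hσ : IsState σ) {l : ℝ} (h₀ : 0 ≤ l)
    (h₁ : l ≤ 1) {Lρ Lσ Lμ : ℝ}
    (hLρ : Tendsto (fun n : ℕ => E (a ^ n) (b ^ n) (statePow ρ n) / n) atTop (𝓝 Lρ))
    (hLσ : Tendsto (fun n : ℕ => E (a ^ n) (b ^ n) (statePow σ n) / n) atTop (𝓝 Lσ))
    (hLμ : Tendsto (fun n : ℕ => E (a ^ n) (b ^ n) (statePow (l • ρ + (1 - l) • σ) n) / n)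
      atTop (𝓝 Lμ)) :
    Lμ ≤ l * Lρ + (1 - l) * Lσ := by
  refine le_of_forall_pos_le_add fun ε hε => ?_
  obtain ⟨Cρ, hCρ⟩ := exists_le_mul_add_of_tendsto_div hLρ (lt_add_of_pos_right Lρ hε)
  obtain ⟨Cσ, hCσ⟩ := exists_le_mul_add_of_tendsto_div hLσ (lt_add_of_pos_right Lσ hε)
  have := le_of_tendsto_div_of_le_mul_add hLμ
    (hE6.statePow_convexComb_le hE5 hinv hρ hσ h₀ h₁ hCρ hCσ)
  linarith

end

/-- For an entanglement measure satisfying (E5) subadditivity and (E6) convexity, the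
regularization `E^∞(ρ) = lim E(ρ^{⊗n})/n` exists for every state, and `E^∞` is convex. -/
theorem regularization_exists_and_convex (E : EntFun) (hnn : MixedNonneg E)
    (hinv : MixedLocalUnitaryInv E) (hE5 : CondE5 E) (hE6 : CondE6 E) :
    (∀ (a b : ℕ) (ρ : Matrix (Fin a × Fin b) (Fin a × Fin b) ℂ), IsState ρ →
        ∃ L : ℝ, Filter.Tendsto (fun n : ℕ => E (a ^ n) (b ^ n) (statePow ρ n) / n)
          Filter.atTop (nhds L)) ∧
      (∀ (a b : ℕ) (ρ σ : Matrix (Fin a × Fin b) (Fin a × Fin b) ℂ), IsState ρ → IsState σ →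
        ∀ l : ℝ, 0 ≤ l → l ≤ 1 → ∀ Lρ Lσ Lm : ℝ,
          Filter.Tendsto (fun n : ℕ => E (a ^ n) (b ^ n) (statePow ρ n) / n)
            Filter.atTop (nhds Lρ) →
          Filter.Tendsto (fun n : ℕ => E (a ^ n) (b ^ n) (statePow σ n) / n)
            Filter.atTop (nhds Lσ) →
          Filter.Tendsto (fun n : ℕ =>
              E (a ^ n) (b ^ n) (statePow (l • ρ + (1 - l) • σ) n) / n)
            Filter.atTop (nhds Lm) →
          Lm ≤ l * Lρ + (1 - l) * Lσ) :=
  ⟨fun _ _ _ hρ => hE5.exists_tendsto_statePow_div hnn hinv hρ,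
    fun _ _ _ _ hρ hσ _ h₀ h₁ _ _ _ hLρ hLσ hLμ =>
      hE6.le_convexComb_of_tendsto hE5 hinv hρ hσ h₀ h₁ hLρ hLσ hLμ⟩
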